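/- arXiv:2110.01845 — 2 statements merged into one kernel-verified Lean document; each statement's English description precedes it below -/
import Mathlib

section
/- Let X be a complete CAT(0) space in which the link (space of directions) at every point is a discrete metric space, i.e., any two distinct directions at a point are at angle bounded below by a positive constant. Then every geodesic triangle in X is 0-thin; in particular X is an ℝ-tree. -/
open Filter Set Metric

/-- Euclidean comparison angle via the law of cosines. -/
noncomputable def compAngle (a b c : ℝ) : ℝ := Real.arccos ((a^2 + b^2 - c^2) / (2*a*b))

/-- `γ` is a unit-speed geodesic on the interval `[a,b]`. -/
def IsGeodesicOn {X : Type*} [MetricSpace X] (γ : ℝ → X) (a b : ℝ) : Prop :=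
  ∀ s ∈ Set.Icc a b, ∀ t ∈ Set.Icc a b, dist (γ s) (γ t) = |s - t|

/-- `γ` is a unit-speed geodesic line. -/
def IsGeodesicLine {X : Type*} [MetricSpace X] (γ : ℝ → X) : Prop :=
  ∀ s t : ℝ, dist (γ s) (γ t) = |s - t|

/-- `γ` is a local geodesic on `[a,b]`. -/
def IsLocalGeodesicOn {X : Type*} [MetricSpace X] (γ : ℝ → X) (a b : ℝ) : Prop :=
  ∀ s ∈ Set.Icc a b, ∃ ε > 0, IsGeodesicOn γ (max a (s - ε)) (min b (s + ε))

/-- Every pair of points is joined by a unit-speed geodesic. -/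
def GeodesicSpace (X : Type*) [MetricSpace X] : Prop :=
  ∀ x y : X, ∃ γ : ℝ → X, γ 0 = x ∧ γ (dist x y) = y ∧ IsGeodesicOn γ 0 (dist x y)

/-- CAT(0): geodesic space satisfying the CN (comparison) inequality. -/
def CAT0 (X : Type*) [MetricSpace X] : Prop :=
  GeodesicSpace X ∧
  ∀ x y z m : X, dist y m = dist y z / 2 → dist z m = dist y z / 2 →
    dist x m ^ 2 ≤ (dist x y ^ 2 + dist x z ^ 2) / 2 - dist y z ^ 2 / 4

/-- The Alexandrov (upper) angle at the common start point between `γ` and `σ`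
(both assumed to issue from the same point at parameter `0`). -/
noncomputable def alexAngle {X : Type*} [MetricSpace X] (γ σ : ℝ → X) : ℝ :=
  Filter.limsup (fun q : ℝ × ℝ => compAngle q.1 q.2 (dist (γ q.1) (σ q.2)))
    ((nhdsWithin 0 (Set.Ioi 0)) ×ˢ (nhdsWithin 0 (Set.Ioi 0)))

/-- `γ` (defined on `[0, L]`) eventually lies in `S` near its endpoint `L`. -/
def EndsIn {X : Type*} [MetricSpace X] (γ : ℝ → X) (L : ℝ) (S : Set X) : Prop :=
  ∃ ε > 0, ∀ s : ℝ, L - ε < s → s < L → γ s ∈ S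

/-- `γ` eventually lies in `S` near its start point. -/
def StartsIn {X : Type*} [MetricSpace X] (γ : ℝ → X) (S : Set X) : Prop :=
  ∃ ε > 0, ∀ s : ℝ, 0 < s → s < ε → γ s ∈ S

/-- `γ` is a unit-speed geodesic from `x` to `y` parametrised on `[0, dist x y]`. -/
def GeodesicFromTo {X : Type*} [MetricSpace X] (γ : ℝ → X) (x y : X) : Prop :=
  γ 0 = x ∧ γ (dist x y) = y ∧ IsGeodesicOn γ 0 (dist x y)

/-- `γ` (on `[0,L]`) ends at `η u` perpendicularly to the curve `η`. -/
def EndsPerp {X : Type*} [MetricSpace X] (γ : ℝ → X) (L : ℝ) (η : ℝ → X) (u : ℝ) : Prop :=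
  γ L = η u ∧ alexAngle (fun s => γ (L - s)) (fun s => η (u + s)) = Real.pi / 2 ∧
    alexAngle (fun s => γ (L - s)) (fun s => η (u - s)) = Real.pi / 2

/-- `γ` starts at `η u` perpendicularly to the curve `η`. -/
def StartsPerp {X : Type*} [MetricSpace X] (γ : ℝ → X) (η : ℝ → X) (u : ℝ) : Prop :=
  γ 0 = η u ∧ alexAngle γ (fun s => η (u + s)) = Real.pi / 2 ∧
    alexAngle γ (fun s => η (u - s)) = Real.pi / 2

/-- Abstract data of a (piecewise Euclidean) triangle complex structure on a metric space:
edges and triangles with their interiors, edges being geodesically parametrised. -/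
structure TriangleComplex (X : Type*) [MetricSpace X] where
  Edge : Type*
  Tri : Type*
  edgeSet : Edge → Set X
  triSet : Tri → Set X
  edgeInt : Edge → Set X
  triInt : Tri → Set X
  edgeParam : Edge → ℝ → X
  edgeLen : Edge → ℝ
  edgeParam_geodesic : ∀ e, IsGeodesicOn (edgeParam e) 0 (edgeLen e)
  edgeParam_maps : ∀ e, ∀ s ∈ Set.Icc (0:ℝ) (edgeLen e), edgeParam e s ∈ edgeSet e
  edgeInt_sub : ∀ e, edgeInt e ⊆ edgeSet e
  triInt_sub : ∀ T, triInt T ⊆ triSet T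

section AuxTree

open Real

lemma arccos_anti {x y : ℝ} (h : x ≤ y) : Real.arccos y ≤ Real.arccos x := by
  rw [Real.arccos_eq_pi_div_two_sub_arcsin, Real.arccos_eq_pi_div_two_sub_arcsin]
  have := Real.monotone_arcsin h
  linarith

variable {X : Type*} [MetricSpace X]

lemma IsGeodesicOn.mono {γ : ℝ → X} {a b a' b' : ℝ} (h : IsGeodesicOn γ a b)
    (hsub : Set.Icc a' b' ⊆ Set.Icc a b) : IsGeodesicOn γ a' b' :=
  fun s hs t ht => h s (hsub hs) t (hsub ht)

/-- midpoint convexity + continuity implies convexity, on an interval -/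
lemma convex_combo_of_midpoint {H : ℝ → ℝ} {a b : ℝ}
    (hc : ContinuousOn H (Set.Icc a b))
    (hm : ∀ s ∈ Set.Icc a b, ∀ t ∈ Set.Icc a b, H ((s+t)/2) ≤ (H s + H t)/2) :
    ∀ s ∈ Set.Icc a b, ∀ t ∈ Set.Icc a b, ∀ θ ∈ Set.Icc (0:ℝ) 1,
      H ((1-θ)*s + θ*t) ≤ (1-θ)*H s + θ*H t := by
  intro s hs t ht
  have hmem : ∀ θ ∈ Set.Icc (0:ℝ) 1, (1-θ)*s + θ*t ∈ Set.Icc a b := by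
    intro θ hθ
    constructor
    · nlinarith [hs.1, ht.1, hθ.1, hθ.2]
    · nlinarith [hs.2, ht.2, hθ.1, hθ.2]
  set φ : ℝ → ℝ := fun θ => H ((1-θ)*s + θ*t) - ((1-θ)*H s + θ*H t) with hφ
  clear_value φ
  have hφc : ContinuousOn φ (Set.Icc (0:ℝ) 1) := by
    rw [hφ]
    apply ContinuousOn.sub
    · exact hc.comp (by fun_prop) hmem
    · fun_prop
  have hφm : ∀ θ₁ ∈ Set.Icc (0:ℝ) 1, ∀ θ₂ ∈ Set.Icc (0:ℝ) 1,
      φ ((θ₁+θ₂)/2) ≤ (φ θ₁ + φ θ₂)/2 := by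
    intro θ₁ h₁ θ₂ h₂
    have key := hm _ (hmem θ₁ h₁) _ (hmem θ₂ h₂)
    have e : (1-(θ₁+θ₂)/2)*s + ((θ₁+θ₂)/2)*t
        = (((1-θ₁)*s + θ₁*t) + ((1-θ₂)*s + θ₂*t))/2 := by ring
    simp only [hφ, e]
    linarith
  have h0 : φ 0 = 0 := by simp [hφ]
  have h1 : φ 1 = 0 := by simp [hφ]
  obtain ⟨θm, hθm, hmax⟩ := isCompact_Icc.exists_isMaxOn
    (Set.nonempty_Icc.mpr zero_le_one) hφc
  have hmax' : ∀ θ ∈ Set.Icc (0:ℝ) 1, φ θ ≤ φ θm := hmax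
  have hM : φ θm ≤ 0 := by
    rcases eq_or_lt_of_le hθm.1 with h | hl
    · rw [← h, h0]
    rcases eq_or_lt_of_le hθm.2 with h | hr
    · rw [h, h1]
    set e := min θm (1 - θm) with he
    have hepos : 0 < e := lt_min hl (by linarith)
    have hele : e ≤ θm := min_le_left _ _
    have hele' : e ≤ 1 - θm := min_le_right _ _
    have hm1 : θm - e ∈ Set.Icc (0:ℝ) 1 := by
      constructor <;> [linarith; linarith [hθm.2]]
    have hm2 : θm + e ∈ Set.Icc (0:ℝ) 1 := by
      constructor <;> [linarith [hθm.1]; linarith]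
    have hmid := hφm _ hm1 _ hm2
    have e1 : ((θm - e) + (θm + e))/2 = θm := by ring
    rw [e1] at hmid
    rcases min_cases θm (1 - θm) with ⟨hc1, _⟩ | ⟨hc1, _⟩
    · have h2 : θm - e = 0 := by rw [he, hc1]; ring
      rw [h2, h0] at hmid
      have := hmax' _ hm2
      linarith
    · have h2 : θm + e = 1 := by rw [he, hc1]; ring
      rw [h2, h1] at hmid
      have := hmax' _ hm1
      linarith
  intro θ hθ
  have h3 := hmax' θ hθ
  rw [hφ] at h3 hM
  simp only at h3 hM
  linarith

end AuxTree
section AuxTree2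

variable {X : Type*} [MetricSpace X]

/-- Distance to a point along a geodesic is continuous. -/
lemma distGeo_continuousOn {γ : ℝ → X} {a b : ℝ} (hγ : IsGeodesicOn γ a b) (x : X) :
    ContinuousOn (fun u => dist x (γ u)) (Set.Icc a b) := by
  have : LipschitzOnWith 1 (fun u => dist x (γ u)) (Set.Icc a b) := by
    apply LipschitzOnWith.of_dist_le_mul
    intro u hu v hv
    have h1 : dist (γ u) (γ v) = |u - v| := hγ u hu v hv
    have h2 : |dist x (γ u) - dist x (γ v)| ≤ dist (γ u) (γ v) := by
      rw [dist_comm x (γ u), dist_comm x (γ v)]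
      exact abs_dist_sub_le _ _ _
    rw [Real.dist_eq, Real.dist_eq]
    simpa [h1] using h2
  simpa using this.continuousOn

/-- Interpolated CN inequality along a geodesic. -/
lemma cn_interp
    (hCN : ∀ x y z m : X, dist y m = dist y z / 2 → dist z m = dist y z / 2 →
      dist x m ^ 2 ≤ (dist x y ^ 2 + dist x z ^ 2) / 2 - dist y z ^ 2 / 4)
    {γ : ℝ → X} {a b : ℝ} (hγ : IsGeodesicOn γ a b) (x : X) :
    ∀ s ∈ Set.Icc a b, ∀ t ∈ Set.Icc a b, ∀ θ ∈ Set.Icc (0:ℝ) 1,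
      dist x (γ ((1-θ)*s + θ*t)) ^ 2
        ≤ (1-θ) * dist x (γ s)^2 + θ * dist x (γ t)^2 - θ*(1-θ)*(s-t)^2 := by
  have hcont : ContinuousOn (fun u => dist x (γ u)^2 - u^2) (Set.Icc a b) := by
    apply ContinuousOn.sub
    · exact (distGeo_continuousOn hγ x).pow 2
    · fun_prop
  have hmidp : ∀ s ∈ Set.Icc a b, ∀ t ∈ Set.Icc a b,
      (fun u => dist x (γ u)^2 - u^2) ((s+t)/2)
        ≤ ((fun u => dist x (γ u)^2 - u^2) s + (fun u => dist x (γ u)^2 - u^2) t)/2 := by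
    intro s hs t ht
    have hmid : (s+t)/2 ∈ Set.Icc a b := by
      constructor
      · linarith [hs.1, ht.1]
      · linarith [hs.2, ht.2]
    have e1 : dist (γ s) (γ ((s+t)/2)) = dist (γ s) (γ t) / 2 := by
      rw [hγ s hs _ hmid, hγ s hs t ht]
      rw [show s - (s+t)/2 = (s-t)/2 by ring, abs_div]
      norm_num
    have e2 : dist (γ t) (γ ((s+t)/2)) = dist (γ s) (γ t) / 2 := by
      rw [hγ t ht _ hmid, hγ s hs t ht]
      rw [show t - (s+t)/2 = -((s-t)/2) by ring, abs_neg, abs_div]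
      norm_num
    have key := hCN x (γ s) (γ t) (γ ((s+t)/2)) e1 e2
    have e3 : dist (γ s) (γ t) = |s - t| := hγ s hs t ht
    rw [e3] at key
    have e4 : |s - t|^2 = (s-t)^2 := sq_abs _
    rw [e4] at key
    simp only
    nlinarith [key]
  have hH := convex_combo_of_midpoint hcont hmidp
  intro s hs t ht θ hθ
  have := hH s hs t ht θ hθ
  nlinarith [this]

/-- Common-point convexity: two geodesics issuing from the same point diverge
at most linearly. -/
lemma cp
    (hCN : ∀ x y z m : X, dist y m = dist y z / 2 → dist z m = dist y z / 2 →
      dist x m ^ 2 ≤ (dist x y ^ 2 + dist x z ^ 2) / 2 - dist y z ^ 2 / 4)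
    {c₁ c₂ : ℝ → X} {p : X} {L₁ L₂ : ℝ}
    (h1 : IsGeodesicOn c₁ 0 L₁) (h2 : IsGeodesicOn c₂ 0 L₂)
    (hL₁ : 0 ≤ L₁) (hL₂ : 0 ≤ L₂) (hp1 : c₁ 0 = p) (hp2 : c₂ 0 = p)
    {θ : ℝ} (hθ : θ ∈ Set.Icc (0:ℝ) 1) :
    dist (c₁ (θ*L₁)) (c₂ (θ*L₂)) ≤ θ * dist (c₁ L₁) (c₂ L₂) := by
  obtain ⟨hθ0, hθ1⟩ := hθ
  have hmem1 : θ*L₁ ∈ Set.Icc 0 L₁ := ⟨mul_nonneg hθ0 hL₁, by nlinarith⟩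
  have hmem2 : θ*L₂ ∈ Set.Icc 0 L₂ := ⟨mul_nonneg hθ0 hL₂, by nlinarith⟩
  have hz1 : (0:ℝ) ∈ Set.Icc 0 L₁ := ⟨le_refl _, hL₁⟩
  have hz2 : (0:ℝ) ∈ Set.Icc 0 L₂ := ⟨le_refl _, hL₂⟩
  have he1 : L₁ ∈ Set.Icc 0 L₁ := ⟨hL₁, le_refl _⟩
  have he2 : L₂ ∈ Set.Icc 0 L₂ := ⟨hL₂, le_refl _⟩
  -- distance from c₁ (θL₁) to p
  have hd1 : dist (c₁ (θ*L₁)) p = θ*L₁ := by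
    rw [← hp1, h1 _ hmem1 _ hz1, sub_zero]
    exact abs_of_nonneg (mul_nonneg hθ0 hL₁)
  have hd2 : dist (c₂ L₂) p = L₂ := by
    rw [← hp2, h2 _ he2 _ hz2, sub_zero]
    exact abs_of_nonneg hL₂
  have A := cn_interp hCN h2 (c₁ (θ*L₁)) 0 hz2 L₂ he2 θ ⟨hθ0, hθ1⟩
  have B := cn_interp hCN h1 (c₂ L₂) 0 hz1 L₁ he1 θ ⟨hθ0, hθ1⟩
  rw [show (1-θ)*0 + θ*L₂ = θ*L₂ by ring] at A
  rw [show (1-θ)*0 + θ*L₁ = θ*L₁ by ring] at B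
  rw [hp2, hd1] at A
  rw [hp1, hd2] at B
  rw [dist_comm (c₂ L₂) (c₁ (θ*L₁)), dist_comm (c₂ L₂) (c₁ L₁)] at B
  have hsq : dist (c₁ (θ*L₁)) (c₂ (θ*L₂))^2 ≤ (θ * dist (c₁ L₁) (c₂ L₂))^2 := by
    nlinarith [A, B]
  have h5 : dist (c₁ (θ*L₁)) (c₂ (θ*L₂)) = Real.sqrt (dist (c₁ (θ*L₁)) (c₂ (θ*L₂))^2) :=
    (Real.sqrt_sq dist_nonneg).symm
  rw [h5]
  calc Real.sqrt (dist (c₁ (θ*L₁)) (c₂ (θ*L₂))^2)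
      ≤ Real.sqrt ((θ * dist (c₁ L₁) (c₂ L₂))^2) := Real.sqrt_le_sqrt hsq
    _ = θ * dist (c₁ L₁) (c₂ L₂) := Real.sqrt_sq (by positivity)

/-- Pythagorean inequality at a point minimizing distance along a geodesic. -/
lemma py
    (hCN : ∀ x y z m : X, dist y m = dist y z / 2 → dist z m = dist y z / 2 →
      dist x m ^ 2 ≤ (dist x y ^ 2 + dist x z ^ 2) / 2 - dist y z ^ 2 / 4)
    {γ : ℝ → X} {a b t₀ : ℝ} (hγ : IsGeodesicOn γ a b) (x : X)
    (ht₀ : t₀ ∈ Set.Icc a b)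
    (hmin : ∀ t ∈ Set.Icc a b, dist x (γ t₀) ≤ dist x (γ t)) :
    ∀ t ∈ Set.Icc a b, dist x (γ t₀)^2 + (t - t₀)^2 ≤ dist x (γ t)^2 := by
  intro t ht
  have key : ∀ θ : ℝ, 0 < θ → θ < 1 →
      dist x (γ t₀)^2 + (1-θ)*(t-t₀)^2 ≤ dist x (γ t)^2 := by
    intro θ hθ0 hθ1
    have hI := cn_interp hCN hγ x t₀ ht₀ t ht θ ⟨hθ0.le, hθ1.le⟩
    have hmem : (1-θ)*t₀ + θ*t ∈ Set.Icc a b := by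
      constructor
      · nlinarith [ht₀.1, ht.1]
      · nlinarith [ht₀.2, ht.2]
    have h1 := hmin _ hmem
    have h2 : dist x (γ t₀)^2 ≤ dist x (γ ((1-θ)*t₀ + θ*t))^2 := by
      nlinarith [dist_nonneg (x := x) (y := γ t₀)]
    nlinarith [hI, h2]
  by_contra hcon
  push_neg at hcon
  rcases eq_or_ne t t₀ with h | h
  · rw [h] at hcon
    simp at hcon
  have hne : 0 < (t - t₀)^2 := by
    have hsub : t - t₀ ≠ 0 := sub_ne_zero.mpr h
    positivity
  set E := dist x (γ t₀)^2 + (t-t₀)^2 - dist x (γ t)^2 with hE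
  have hEpos : 0 < E := by rw [hE]; linarith
  set θ := min (1/2 : ℝ) (E / (2*(t-t₀)^2)) with hθdef
  have hθ0 : 0 < θ := lt_min (by norm_num) (div_pos hEpos (by nlinarith [hne]))
  have hθ1 : θ < 1 := lt_of_le_of_lt (min_le_left _ _) (by norm_num)
  have hsmall : θ * (t-t₀)^2 ≤ E/2 := by
    have hle : θ ≤ E / (2*(t-t₀)^2) := min_le_right _ _
    calc θ * (t-t₀)^2 ≤ (E / (2*(t-t₀)^2)) * (t-t₀)^2 := by nlinarith [hle, hne]
      _ = E/2 := by field_simp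
  have := key θ hθ0 hθ1
  nlinarith [this, hsmall]

end AuxTree2
section AuxTree3

variable {X : Type*} [MetricSpace X]

/-- Scaled distance between two unit-speed geodesics from a common point, at
vanishing scale. -/
noncomputable def tauR (a b : ℝ → X) (R : ℝ) : ℝ :=
  sInf ((fun ρ => dist (a ρ) (b ρ) / ρ) '' Set.Ioc 0 R)

lemma tauR_bddBelow (a b : ℝ → X) (R : ℝ) :
    BddBelow ((fun ρ => dist (a ρ) (b ρ) / ρ) '' Set.Ioc 0 R) := by
  refine ⟨0, ?_⟩
  rintro v ⟨ρ, hρ, rfl⟩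
  exact div_nonneg dist_nonneg hρ.1.le

lemma tauR_nonneg {a b : ℝ → X} {R : ℝ} (hR : 0 < R) : 0 ≤ tauR a b R := by
  apply le_csInf
  · exact ⟨_, Set.mem_image_of_mem _ (Set.mem_Ioc.mpr ⟨hR, le_refl _⟩)⟩
  · rintro v ⟨ρ, hρ, rfl⟩
    exact div_nonneg dist_nonneg hρ.1.le

lemma tauR_le {a b : ℝ → X} {R ρ : ℝ} (hρ : ρ ∈ Set.Ioc 0 R) :
    tauR a b R ≤ dist (a ρ) (b ρ) / ρ :=
  csInf_le (tauR_bddBelow a b R) (Set.mem_image_of_mem _ hρ)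

lemma le_tauR {a b : ℝ → X} {R c : ℝ} (hR : 0 < R)
    (h : ∀ ρ ∈ Set.Ioc (0:ℝ) R, c ≤ dist (a ρ) (b ρ) / ρ) : c ≤ tauR a b R := by
  apply le_csInf
  · exact ⟨_, Set.mem_image_of_mem _ (Set.mem_Ioc.mpr ⟨hR, le_refl _⟩)⟩
  · rintro v ⟨ρ, hρ, rfl⟩
    exact h ρ hρ

lemma tauR_exists_lt {a b : ℝ → X} {R c : ℝ} (hR : 0 < R) (h : tauR a b R < c) :
    ∃ ρ ∈ Set.Ioc (0:ℝ) R, dist (a ρ) (b ρ) / ρ < c := by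
  obtain ⟨v, ⟨ρ, hρ, rfl⟩, hlt⟩ := exists_lt_of_csInf_lt
    ⟨_, Set.mem_image_of_mem _ (Set.mem_Ioc.mpr ⟨hR, le_refl R⟩)⟩ h
  exact ⟨ρ, hρ, hlt⟩

/-- Monotonicity of the scaled distance between geodesics from a common point. -/
lemma psi_div_mono
    (hCN : ∀ x y z m : X, dist y m = dist y z / 2 → dist z m = dist y z / 2 →
      dist x m ^ 2 ≤ (dist x y ^ 2 + dist x z ^ 2) / 2 - dist y z ^ 2 / 4)
    {a b : ℝ → X} {p : X} {R : ℝ}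
    (ha : IsGeodesicOn a 0 R) (hb : IsGeodesicOn b 0 R)
    (hpa : a 0 = p) (hpb : b 0 = p) {ρ' ρ : ℝ}
    (h0 : 0 < ρ') (h1 : ρ' ≤ ρ) (h2 : ρ ≤ R) :
    dist (a ρ') (b ρ') / ρ' ≤ dist (a ρ) (b ρ) / ρ := by
  have hρ0 : (0:ℝ) < ρ := lt_of_lt_of_le h0 h1
  have hsub : Set.Icc (0:ℝ) ρ ⊆ Set.Icc (0:ℝ) R := Set.Icc_subset_Icc (le_refl _) h2
  have hθ : ρ'/ρ ∈ Set.Icc (0:ℝ) 1 := ⟨by positivity, by rw [div_le_one hρ0]; exact h1⟩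
  have := cp hCN (ha.mono hsub) (hb.mono hsub) hρ0.le hρ0.le hpa hpb hθ
  rw [div_mul_cancel₀ _ hρ0.ne'] at this
  rw [div_le_div_iff₀ h0 hρ0]
  calc dist (a ρ') (b ρ') * ρ ≤ (ρ'/ρ * dist (a ρ) (b ρ)) * ρ := by nlinarith [this]
    _ = dist (a ρ) (b ρ) * ρ' := by field_simp

/-- Triangle inequality for `tauR` among geodesics from a common point. -/
lemma tauR_triangle
    (hCN : ∀ x y z m : X, dist y m = dist y z / 2 → dist z m = dist y z / 2 →
      dist x m ^ 2 ≤ (dist x y ^ 2 + dist x z ^ 2) / 2 - dist y z ^ 2 / 4)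
    {a b c : ℝ → X} {p : X} {R : ℝ} (hR : 0 < R)
    (ha : IsGeodesicOn a 0 R) (hb : IsGeodesicOn b 0 R) (hc : IsGeodesicOn c 0 R)
    (hpa : a 0 = p) (hpb : b 0 = p) (hpc : c 0 = p) :
    tauR a c R ≤ tauR a b R + tauR b c R := by
  by_contra hlt
  push_neg at hlt
  set ε := (tauR a c R - (tauR a b R + tauR b c R)) / 3 with hε
  have hεpos : 0 < ε := by rw [hε]; linarith
  obtain ⟨ρ₁, hρ₁, hv₁⟩ := tauR_exists_lt hR (show tauR a b R < tauR a b R + ε by linarith)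
  obtain ⟨ρ₂, hρ₂, hv₂⟩ := tauR_exists_lt hR (show tauR b c R < tauR b c R + ε by linarith)
  set ρ := min ρ₁ ρ₂ with hρdef
  have hρmem : ρ ∈ Set.Ioc (0:ℝ) R := ⟨lt_min hρ₁.1 hρ₂.1, (min_le_left _ _).trans hρ₁.2⟩
  have hm1 : dist (a ρ) (b ρ) / ρ ≤ dist (a ρ₁) (b ρ₁) / ρ₁ :=
    psi_div_mono hCN ha hb hpa hpb hρmem.1 (min_le_left _ _) hρ₁.2
  have hm2 : dist (b ρ) (c ρ) / ρ ≤ dist (b ρ₂) (c ρ₂) / ρ₂ :=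
    psi_div_mono hCN hb hc hpb hpc hρmem.1 (min_le_right _ _) hρ₂.2
  have htau := tauR_le (a := a) (b := c) hρmem
  have htri : dist (a ρ) (c ρ) / ρ ≤ dist (a ρ) (b ρ) / ρ + dist (b ρ) (c ρ) / ρ := by
    rw [← add_div, div_le_div_iff₀ hρmem.1 hρmem.1]
    nlinarith [dist_triangle (a ρ) (b ρ) (c ρ), hρmem.1]
  linarith

end AuxTree3
section AuxTree4

open Filter

lemma tree_arith {u v c d : ℝ} (hu : 0 < u) (hv : 0 < v) (huv : u ≤ v)
    (hc0 : 0 < c) (hc1 : c ≤ 1) (hd0 : 0 ≤ d) (hd : d ≤ (v - u) + c * u) :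
    1 - c - c^2/2 ≤ (u^2 + v^2 - d^2) / (2*u*v) := by
  rw [le_div_iff₀ (by positivity : (0:ℝ) < 2*u*v)]
  nlinarith [hd, hd0, hu, hv, huv, hc0, hc1, sq_nonneg (v - u),
    mul_nonneg (mul_nonneg hc0.le hu.le) (sub_nonneg.mpr huv),
    mul_pos hu hv, sq_nonneg (c*u)]

variable {X : Type*} [MetricSpace X]

lemma compAngle_nonneg (a b c : ℝ) : 0 ≤ compAngle a b c := Real.arccos_nonneg _

lemma compAngle_le_pi (a b c : ℝ) : compAngle a b c ≤ Real.pi := Real.arccos_le_pi _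

lemma prodF_neBot : Filter.NeBot ((nhdsWithin (0:ℝ) (Set.Ioi 0)) ×ˢ (nhdsWithin (0:ℝ) (Set.Ioi 0))) :=
  Filter.prod_neBot.mpr ⟨inferInstance, inferInstance⟩

lemma alex_le_of_eventually {γ σ : ℝ → X} {A : ℝ}
    (h : ∀ᶠ q : ℝ × ℝ in (nhdsWithin (0:ℝ) (Set.Ioi 0)) ×ˢ (nhdsWithin (0:ℝ) (Set.Ioi 0)),
      compAngle q.1 q.2 (dist (γ q.1) (σ q.2)) ≤ A) :
    alexAngle γ σ ≤ A := by
  haveI := prodF_neBot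
  unfold alexAngle
  exact Filter.limsup_le_of_le
    (Filter.isCoboundedUnder_le_of_le _ (x := 0) (fun q => by exact compAngle_nonneg _ _ _)) h

lemma le_alex_of_frequently {γ σ : ℝ → X} {A : ℝ}
    (h : ∃ᶠ q : ℝ × ℝ in (nhdsWithin (0:ℝ) (Set.Ioi 0)) ×ˢ (nhdsWithin (0:ℝ) (Set.Ioi 0)),
      A ≤ compAngle q.1 q.2 (dist (γ q.1) (σ q.2))) :
    A ≤ alexAngle γ σ := by
  unfold alexAngle
  exact Filter.le_limsup_of_frequently_le h
    (Filter.isBoundedUnder_of ⟨Real.pi, fun q => by exact compAngle_le_pi _ _ _⟩)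

/-- If the angle between two geodesics from `p` is zero, then they diverge
sublinearly. -/
lemma tau_eq_zero_of_alex_eq_zero
    {a b : ℝ → X} {p : X} {R : ℝ} (hR : 0 < R)
    (ha : IsGeodesicOn a 0 R) (hb : IsGeodesicOn b 0 R)
    (hpa : a 0 = p) (hpb : b 0 = p)
    (h0 : alexAngle a b = 0) : tauR a b R = 0 := by
  by_contra hne
  have hτpos : 0 < tauR a b R := lt_of_le_of_ne (tauR_nonneg hR) (Ne.symm hne)
  set τ := tauR a b R with hτ
  have hτ2 : τ ≤ 2 := by
    have h3 := tauR_le (a := a) (b := b) (Set.mem_Ioc.mpr ⟨hR, le_refl R⟩)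
    have h1 : dist (a R) p = R := by
      rw [← hpa, ha R ⟨hR.le, le_refl _⟩ 0 ⟨le_refl _, hR.le⟩, sub_zero,
        abs_of_nonneg hR.le]
    have h2 : dist (b R) p = R := by
      rw [← hpb, hb R ⟨hR.le, le_refl _⟩ 0 ⟨le_refl _, hR.le⟩, sub_zero,
        abs_of_nonneg hR.le]
    have hd : dist (a R) (b R) ≤ 2 * R := by
      calc dist (a R) (b R) ≤ dist (a R) p + dist p (b R) := dist_triangle _ _ _
        _ = 2 * R := by rw [dist_comm p (b R)]; linarith
    rw [hτ]
    calc tauR a b R ≤ dist (a R) (b R) / R := h3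
      _ ≤ 2 := by rw [div_le_iff₀ hR]; linarith
  set κ := Real.arccos (1 - τ^2/2) with hκ
  have hκpos : 0 < κ := by
    rw [hκ, Real.arccos_pos]
    nlinarith
  have hfreq : ∃ᶠ q : ℝ × ℝ in (nhdsWithin (0:ℝ) (Set.Ioi 0)) ×ˢ (nhdsWithin (0:ℝ) (Set.Ioi 0)),
      κ ≤ compAngle q.1 q.2 (dist (a q.1) (b q.2)) := by
    have hdiag : Filter.Tendsto (fun ρ : ℝ => (ρ, ρ)) (nhdsWithin (0:ℝ) (Set.Ioi 0))
        ((nhdsWithin (0:ℝ) (Set.Ioi 0)) ×ˢ (nhdsWithin (0:ℝ) (Set.Ioi 0))) :=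
      Filter.Tendsto.prodMk tendsto_id tendsto_id
    apply hdiag.frequently
    apply Filter.Eventually.frequently
    filter_upwards [Ioc_mem_nhdsGT hR] with ρ hρ
    show κ ≤ compAngle ρ ρ (dist (a ρ) (b ρ))
    have hψ : τ * ρ ≤ dist (a ρ) (b ρ) := by
      have h4 := tauR_le (a := a) (b := b) hρ
      rw [← hτ] at h4
      calc τ * ρ ≤ (dist (a ρ) (b ρ) / ρ) * ρ := by nlinarith [h4, hρ.1]
        _ = dist (a ρ) (b ρ) := div_mul_cancel₀ _ hρ.1.ne'
    have hsq : (τ*ρ)^2 ≤ dist (a ρ) (b ρ)^2 := by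
      nlinarith [hψ, mul_nonneg hτpos.le hρ.1.le]
    have harg : (ρ^2 + ρ^2 - dist (a ρ) (b ρ)^2) / (2*ρ*ρ) ≤ 1 - τ^2/2 := by
      rw [div_le_iff₀ (by nlinarith [hρ.1] : (0:ℝ) < 2*ρ*ρ)]
      nlinarith [hsq]
    rw [hκ]
    unfold compAngle
    exact arccos_anti harg
  have h5 := le_alex_of_frequently hfreq
  rw [h0] at h5
  linarith

/-- If two geodesics from `p` diverge sublinearly at some scale then the angle
between them is small. -/
lemma alex_le_of_tau_lt
    (hCN : ∀ x y z m : X, dist y m = dist y z / 2 → dist z m = dist y z / 2 →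
      dist x m ^ 2 ≤ (dist x y ^ 2 + dist x z ^ 2) / 2 - dist y z ^ 2 / 4)
    {a b : ℝ → X} {p : X} {R : ℝ} (hR : 0 < R)
    (ha : IsGeodesicOn a 0 R) (hb : IsGeodesicOn b 0 R)
    (hpa : a 0 = p) (hpb : b 0 = p)
    {c : ℝ} (hc0 : 0 < c) (hc1 : c ≤ 1) (h : tauR a b R < c) :
    alexAngle a b ≤ Real.arccos (1 - c - c^2/2) := by
  obtain ⟨ρ₀, hρ₀, hval⟩ := tauR_exists_lt hR h
  apply alex_le_of_eventually
  have hmem : (Set.Ioc (0:ℝ) ρ₀) ×ˢ (Set.Ioc (0:ℝ) ρ₀) ∈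
      (nhdsWithin (0:ℝ) (Set.Ioi 0)) ×ˢ (nhdsWithin (0:ℝ) (Set.Ioi 0)) :=
    Filter.prod_mem_prod (Ioc_mem_nhdsGT hρ₀.1) (Ioc_mem_nhdsGT hρ₀.1)
  filter_upwards [hmem]
  rintro ⟨s, t⟩ ⟨hs, ht⟩
  show compAngle s t (dist (a s) (b t)) ≤ _
  have hψ : ∀ u ∈ Set.Ioc (0:ℝ) ρ₀, dist (a u) (b u) < c * u := by
    intro u hu
    have hmono : dist (a u) (b u) / u ≤ dist (a ρ₀) (b ρ₀) / ρ₀ :=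
      psi_div_mono hCN ha hb hpa hpb hu.1 hu.2 hρ₀.2
    have h6 : dist (a u) (b u) / u < c := lt_of_le_of_lt hmono hval
    rw [div_lt_iff₀ hu.1] at h6
    linarith
  have harg : 1 - c - c^2/2 ≤ (s^2 + t^2 - dist (a s) (b t)^2) / (2*s*t) := by
    rcases le_total s t with hst | hts
    · have hbv : dist (b s) (b t) = t - s := by
        rw [hb s ⟨hs.1.le, hs.2.trans hρ₀.2⟩ t ⟨ht.1.le, ht.2.trans hρ₀.2⟩,
          abs_of_nonpos (by linarith)]
        ring
      have hd : dist (a s) (b t) ≤ (t - s) + c * s := by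
        calc dist (a s) (b t) ≤ dist (a s) (b s) + dist (b s) (b t) := dist_triangle _ _ _
          _ ≤ (t - s) + c * s := by rw [hbv]; linarith [hψ s hs]
      exact tree_arith hs.1 ht.1 hst hc0 hc1 dist_nonneg hd
    · have hav : dist (a s) (a t) = s - t := by
        rw [ha s ⟨hs.1.le, hs.2.trans hρ₀.2⟩ t ⟨ht.1.le, ht.2.trans hρ₀.2⟩,
          abs_of_nonneg (by linarith)]
      have hd : dist (a s) (b t) ≤ (s - t) + c * t := by
        calc dist (a s) (b t) ≤ dist (a s) (a t) + dist (a t) (b t) := dist_triangle _ _ _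
          _ ≤ (s - t) + c * t := by rw [hav]; linarith [hψ t ht]
      have h7 := tree_arith ht.1 hs.1 hts hc0 hc1 (dist_nonneg (x := a s) (y := b t)) hd
      calc (1:ℝ) - c - c^2/2 ≤ (t^2 + s^2 - dist (a s) (b t)^2) / (2*t*s) := h7
        _ = (s^2 + t^2 - dist (a s) (b t)^2) / (2*s*t) := by ring_nf
  unfold compAngle
  exact arccos_anti harg

end AuxTree4
section AuxTree5

variable {X : Type*} [MetricSpace X]

/-- Main rigidity lemma: if two positive-length geodesics from `p` satisfy the
Pythagorean lower bound (as issuing from a closest-point projection), and the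
space of directions at `p` is discrete, then they are aligned:
the distance between their endpoints is the sum of their lengths. -/
lemma tree_main_lemma
    (hG : GeodesicSpace X)
    (hCN : ∀ x y z m : X, dist y m = dist y z / 2 → dist z m = dist y z / 2 →
      dist x m ^ 2 ≤ (dist x y ^ 2 + dist x z ^ 2) / 2 - dist y z ^ 2 / 4)
    {p : X}
    (hδ : ∃ δ > 0, ∀ (γ σ : ℝ → X) (L M : ℝ), 0 < L → 0 < M →
      γ 0 = p → σ 0 = p → IsGeodesicOn γ 0 L → IsGeodesicOn σ 0 M →
      alexAngle γ σ = 0 ∨ δ ≤ alexAngle γ σ)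
    {γ₁ γ₂ : ℝ → X} {L₁ L₂ : ℝ}
    (h1 : IsGeodesicOn γ₁ 0 L₁) (h2 : IsGeodesicOn γ₂ 0 L₂)
    (hp1 : γ₁ 0 = p) (hp2 : γ₂ 0 = p) (hL1 : 0 < L₁) (hL2 : 0 < L₂)
    (hpy : ∀ t ∈ Set.Icc (0:ℝ) L₁, ∀ s ∈ Set.Icc (0:ℝ) L₂,
      t^2 + s^2 ≤ dist (γ₁ t) (γ₂ s)^2) :
    dist (γ₁ L₁) (γ₂ L₂) = L₁ + L₂ := by
  obtain ⟨δ, hδpos, hδdich⟩ := hδ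
  have hda : dist (γ₁ L₁) p = L₁ := by
    rw [← hp1, h1 L₁ ⟨hL1.le, le_refl _⟩ 0 ⟨le_refl _, hL1.le⟩, sub_zero,
      abs_of_nonneg hL1.le]
  have hdb : dist (γ₂ L₂) p = L₂ := by
    rw [← hp2, h2 L₂ ⟨hL2.le, le_refl _⟩ 0 ⟨le_refl _, hL2.le⟩, sub_zero,
      abs_of_nonneg hL2.le]
  have htri : dist (γ₁ L₁) (γ₂ L₂) ≤ L₁ + L₂ := by
    calc dist (γ₁ L₁) (γ₂ L₂) ≤ dist (γ₁ L₁) p + dist p (γ₂ L₂) := dist_triangle _ _ _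
      _ = L₁ + L₂ := by rw [hda, dist_comm p (γ₂ L₂), hdb]
  refine le_antisymm htri ?_
  by_contra hlt
  push_neg at hlt
  set ℓ := dist (γ₁ L₁) (γ₂ L₂) with hℓdef
  clear_value ℓ
  have hpyLL := hpy L₁ ⟨hL1.le, le_refl _⟩ L₂ ⟨hL2.le, le_refl _⟩
  have hℓpos : 0 < ℓ := by nlinarith [dist_nonneg (x := γ₁ L₁) (y := γ₂ L₂)]
  set B := L₁ + L₂ - ℓ with hBdef
  clear_value B
  have hBpos : 0 < B := by rw [hBdef]; linarith
  obtain ⟨σ, hσ0, hσe, hσg⟩ := hG (γ₁ L₁) (γ₂ L₂)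
  rw [← hℓdef] at hσe hσg
  set c : ℝ → X := fun u => σ (u * ℓ) with hcdef
  clear_value c
  have hcumem : ∀ u ∈ Set.Icc (0:ℝ) 1, u * ℓ ∈ Set.Icc 0 ℓ :=
    fun u hu => ⟨mul_nonneg hu.1 hℓpos.le, by nlinarith [hu.2]⟩
  have hca : ∀ u ∈ Set.Icc (0:ℝ) 1, dist (γ₁ L₁) (c u) = u * ℓ := by
    intro u hu
    rw [hcdef]
    simp only
    rw [← hσ0, hσg 0 ⟨le_refl _, hℓpos.le⟩ (u*ℓ) (hcumem u hu)]
    rw [abs_of_nonpos (by nlinarith [hu.1] : 0 - u*ℓ ≤ 0)]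
    ring
  have hcb : ∀ u ∈ Set.Icc (0:ℝ) 1, dist (c u) (γ₂ L₂) = ℓ - u * ℓ := by
    intro u hu
    rw [hcdef]
    simp only
    rw [← hσe, hσg (u*ℓ) (hcumem u hu) ℓ ⟨hℓpos.le, le_refl _⟩]
    rw [abs_of_nonpos (by nlinarith [hu.2] : u*ℓ - ℓ ≤ 0)]
    ring
  have hlu : ∀ u ∈ Set.Icc (0:ℝ) 1, B/2 ≤ dist p (c u) := by
    intro u hu
    have t1 : dist (γ₁ L₁) p ≤ dist (γ₁ L₁) (c u) + dist (c u) p := dist_triangle _ _ _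
    have t2 : dist p (γ₂ L₂) ≤ dist p (c u) + dist (c u) (γ₂ L₂) := dist_triangle _ _ _
    rw [hda] at t1
    rw [dist_comm p (γ₂ L₂), hdb] at t2
    rw [hca u hu] at t1
    rw [hcb u hu] at t2
    rw [dist_comm (c u) p] at t1
    rw [hBdef]
    linarith
  choose ζ hζ0 hζe hζg using fun u => hG p (c u)
  set R := min (min L₁ L₂) (B/2) with hRdef
  clear_value R
  have hR : 0 < R := by rw [hRdef]; exact lt_min (lt_min hL1 hL2) (by linarith)
  have hRL1 : R ≤ L₁ := by rw [hRdef]; exact (min_le_left _ _).trans (min_le_left _ _)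
  have hRL2 : R ≤ L₂ := by rw [hRdef]; exact (min_le_left _ _).trans (min_le_right _ _)
  have hRB : R ≤ B/2 := by rw [hRdef]; exact min_le_right _ _
  have hres1 : IsGeodesicOn γ₁ 0 R := h1.mono (Set.Icc_subset_Icc (le_refl _) hRL1)
  have hres2 : IsGeodesicOn γ₂ 0 R := h2.mono (Set.Icc_subset_Icc (le_refl _) hRL2)
  have hresζ : ∀ u ∈ Set.Icc (0:ℝ) 1, IsGeodesicOn (ζ u) 0 R := by
    intro u hu
    exact (hζg u).mono (Set.Icc_subset_Icc (le_refl _) (hRB.trans (hlu u hu)))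
  -- the geodesics ζ 0 and ζ 1 are initial pieces of γ₁ and γ₂ respectively
  have huniq : ∀ u ∈ Set.Icc (0:ℝ) 1, ∀ g : ℝ → X, ∀ L : ℝ, 0 < L →
      IsGeodesicOn g 0 L → g 0 = p → g L = c u → dist p (c u) = L →
      ∀ t ∈ Set.Icc (0:ℝ) L, ζ u t = g t := by
    intro u hu g L hLpos hg hg0 hgL hdL t ht
    have hθ : t/L ∈ Set.Icc (0:ℝ) 1 :=
      ⟨div_nonneg ht.1 hLpos.le, by rw [div_le_one hLpos]; exact ht.2⟩
    have hζgeod : IsGeodesicOn (ζ u) 0 L := by rw [← hdL]; exact hζg u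
    have hζL : ζ u L = c u := by rw [← hdL]; exact hζe u
    have hcp := cp hCN hζgeod hg hLpos.le hLpos.le (hζ0 u) hg0 hθ
    rw [div_mul_cancel₀ _ hLpos.ne'] at hcp
    rw [hζL, hgL, dist_self, mul_zero] at hcp
    exact dist_le_zero.mp hcp
  have hc0 : c 0 = γ₁ L₁ := by rw [hcdef]; simp only [zero_mul]; exact hσ0
  have hl0 : dist p (c 0) = L₁ := by rw [hc0, dist_comm]; exact hda
  have hc1 : c 1 = γ₂ L₂ := by rw [hcdef]; simp only [one_mul]; exact hσe
  have hl1 : dist p (c 1) = L₂ := by rw [hc1, dist_comm]; exact hdb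
  have hζ0eq : ∀ t ∈ Set.Icc (0:ℝ) L₁, ζ 0 t = γ₁ t := by
    intro t ht
    exact huniq 0 ⟨le_refl _, zero_le_one⟩ γ₁ L₁ hL1 h1 hp1 (by rw [hc0]) hl0 t ht
  have hζ1eq : ∀ t ∈ Set.Icc (0:ℝ) L₂, ζ 1 t = γ₂ t := by
    intro t ht
    exact huniq 1 ⟨zero_le_one, le_refl _⟩ γ₂ L₂ hL2 h2 hp2 (by rw [hc1]) hl1 t ht
  have hh0 : tauR γ₁ (ζ 0) R = 0 := by
    refine le_antisymm ?_ (tauR_nonneg hR)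
    have := tauR_le (a := γ₁) (b := ζ 0) (Set.mem_Ioc.mpr ⟨hR, le_refl R⟩)
    rw [hζ0eq R ⟨hR.le, hRL1⟩, dist_self] at this
    simpa using this
  have hh1 : Real.sqrt 2 ≤ tauR γ₁ (ζ 1) R := by
    apply le_tauR hR
    intro ρ hρ
    rw [hζ1eq ρ ⟨hρ.1.le, hρ.2.trans hRL2⟩]
    have hd2 := hpy ρ ⟨hρ.1.le, hρ.2.trans hRL1⟩ ρ ⟨hρ.1.le, hρ.2.trans hRL2⟩
    have hsq : Real.sqrt 2 * ρ ≤ dist (γ₁ ρ) (γ₂ ρ) := by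
      have e1 : Real.sqrt 2 * ρ = Real.sqrt (2 * ρ^2) := by
        rw [Real.sqrt_mul (by norm_num), Real.sqrt_sq hρ.1.le]
      have e2 : dist (γ₁ ρ) (γ₂ ρ) = Real.sqrt (dist (γ₁ ρ) (γ₂ ρ)^2) :=
        (Real.sqrt_sq dist_nonneg).symm
      rw [e1, e2]
      exact Real.sqrt_le_sqrt (by nlinarith [hd2])
    rw [le_div_iff₀ hρ.1]
    exact hsq
  -- Lipschitz bound for u ↦ tauR γ₁ (ζ u) R
  have htb : ∀ u ∈ Set.Icc (0:ℝ) 1, ∀ v ∈ Set.Icc (0:ℝ) 1,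
      tauR (ζ u) (ζ v) R ≤ 4/B * dist (c u) (c v) := by
    intro u hu v hv
    set Lu := dist p (c u) with hLu
    clear_value Lu
    set Lv := dist p (c v) with hLv
    clear_value Lv
    have hBLu : B/2 ≤ Lu := by rw [hLu]; exact hlu u hu
    have hBLv : B/2 ≤ Lv := by rw [hLv]; exact hlu v hv
    have hgu : IsGeodesicOn (ζ u) 0 Lu := by rw [hLu]; exact hζg u
    have hgv : IsGeodesicOn (ζ v) 0 Lv := by rw [hLv]; exact hζg v
    have heu : ζ u Lu = c u := by rw [hLu]; exact hζe u
    have hev : ζ v Lv = c v := by rw [hLv]; exact hζe v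
    have hLupos : 0 < Lu := lt_of_lt_of_le (by linarith) hBLu
    have hLvpos : 0 < Lv := lt_of_lt_of_le (by linarith) hBLv
    have hRLu : R ≤ Lu := hRB.trans hBLu
    have hRLv : R ≤ Lv := hRB.trans hBLv
    set θ := R / Lu with hθdef
    clear_value θ
    have hθnn : 0 ≤ θ := by rw [hθdef]; exact div_nonneg hR.le hLupos.le
    have hθmem : θ ∈ Set.Icc (0:ℝ) 1 := ⟨hθnn, by rw [hθdef, div_le_one hLupos]; exact hRLu⟩
    have e2 : θ * Lu = R := by rw [hθdef]; exact div_mul_cancel₀ _ hLupos.ne'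
    have hcp := cp hCN hgu hgv hLupos.le hLvpos.le (hζ0 u) (hζ0 v) hθmem
    rw [heu, hev] at hcp
    rw [e2] at hcp
    -- hcp : dist (ζ u R) (ζ v (θ * Lv)) ≤ θ * dist (c u) (c v)
    have hθLv : θ * Lv ∈ Set.Icc 0 Lv :=
      ⟨mul_nonneg hθnn hLvpos.le, by
        calc θ * Lv ≤ 1 * Lv := mul_le_mul_of_nonneg_right hθmem.2 hLvpos.le
          _ = Lv := one_mul _⟩
    have hRLvmem : R ∈ Set.Icc 0 Lv := ⟨hR.le, hRLv⟩
    have hstep : dist (ζ v (θ * Lv)) (ζ v R) = |θ * Lv - R| := hgv _ hθLv _ hRLvmem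
    have habs : |θ * Lv - R| ≤ θ * dist (c u) (c v) := by
      have e1 : θ * Lv - R = θ * (Lv - Lu) := by rw [← e2]; ring
      rw [e1, abs_mul, abs_of_nonneg hθnn]
      have h8 : |Lv - Lu| ≤ dist (c u) (c v) := by
        have h9 := abs_dist_sub_le (c v) (c u) p
        rw [dist_comm (c v) p, dist_comm (c u) p, ← hLv, ← hLu, dist_comm (c v) (c u)] at h9
        exact h9
      exact mul_le_mul_of_nonneg_left h8 hθnn
    have hψR : dist (ζ u R) (ζ v R) ≤ 2 * θ * dist (c u) (c v) := by
      calc dist (ζ u R) (ζ v R)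
          ≤ dist (ζ u R) (ζ v (θ * Lv)) + dist (ζ v (θ * Lv)) (ζ v R) := dist_triangle _ _ _
        _ ≤ θ * dist (c u) (c v) + |θ * Lv - R| := by
            rw [hstep]
            exact add_le_add hcp (le_refl _)
        _ ≤ 2 * θ * dist (c u) (c v) := by linarith [habs]
    have htau := tauR_le (a := ζ u) (b := ζ v) (Set.mem_Ioc.mpr ⟨hR, le_refl R⟩)
    have hfin : dist (ζ u R) (ζ v R) / R ≤ 4/B * dist (c u) (c v) := by
      rw [div_le_iff₀ hR]
      have e3 : 2 * θ * dist (c u) (c v) = 2 * R * dist (c u) (c v) / Lu := by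
        rw [hθdef]; ring
      have h9 : 2 * R * dist (c u) (c v) / Lu ≤ 2 * R * dist (c u) (c v) / (B/2) := by
        apply div_le_div_of_nonneg_left ?_ (by linarith) hBLu
        · positivity
      calc dist (ζ u R) (ζ v R) ≤ 2 * θ * dist (c u) (c v) := hψR
        _ = 2 * R * dist (c u) (c v) / Lu := e3
        _ ≤ 2 * R * dist (c u) (c v) / (B/2) := h9
        _ = 4/B * dist (c u) (c v) * R := by
            have hBne : (B:ℝ) ≠ 0 := ne_of_gt hBpos
            field_simp
            ring
    exact htau.trans hfin
  have hcc : ∀ u ∈ Set.Icc (0:ℝ) 1, ∀ v ∈ Set.Icc (0:ℝ) 1,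
      dist (c u) (c v) = ℓ * |u - v| := by
    intro u hu v hv
    rw [hcdef]
    simp only
    rw [hσg _ (hcumem u hu) _ (hcumem v hv)]
    rw [show u*ℓ - v*ℓ = ℓ*(u-v) by ring, abs_mul, abs_of_nonneg hℓpos.le]
  have hLip : ∀ u ∈ Set.Icc (0:ℝ) 1, ∀ v ∈ Set.Icc (0:ℝ) 1,
      |tauR γ₁ (ζ u) R - tauR γ₁ (ζ v) R| ≤ (4*ℓ/B) * |u - v| := by
    intro u hu v hv
    have k1 : tauR γ₁ (ζ u) R ≤ tauR γ₁ (ζ v) R + tauR (ζ v) (ζ u) R :=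
      tauR_triangle hCN hR hres1 (hresζ v hv) (hresζ u hu) hp1 (hζ0 v) (hζ0 u)
    have k2 : tauR γ₁ (ζ v) R ≤ tauR γ₁ (ζ u) R + tauR (ζ u) (ζ v) R :=
      tauR_triangle hCN hR hres1 (hresζ u hu) (hresζ v hv) hp1 (hζ0 u) (hζ0 v)
    have b1 := htb u hu v hv
    have b2 := htb v hv u hu
    rw [hcc u hu v hv] at b1
    rw [hcc v hv u hu] at b2
    rw [abs_sub_comm v u] at b2
    rw [abs_sub_le_iff]
    constructor
    · calc tauR γ₁ (ζ u) R - tauR γ₁ (ζ v) R ≤ tauR (ζ v) (ζ u) R := by linarith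
        _ ≤ 4/B * (ℓ * |u - v|) := b2
        _ = (4*ℓ/B) * |u - v| := by ring
    · calc tauR γ₁ (ζ v) R - tauR γ₁ (ζ u) R ≤ tauR (ζ u) (ζ v) R := by linarith
        _ ≤ 4/B * (ℓ * |u - v|) := b1
        _ = (4*ℓ/B) * |u - v| := by ring
  have hcont : ContinuousOn (fun u => tauR γ₁ (ζ u) R) (Set.Icc (0:ℝ) 1) := by
    have : LipschitzOnWith (Real.toNNReal (4*ℓ/B)) (fun u => tauR γ₁ (ζ u) R)
        (Set.Icc (0:ℝ) 1) := by
      apply LipschitzOnWith.of_dist_le_mul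
      intro u hu v hv
      rw [Real.dist_eq, Real.dist_eq]
      calc |tauR γ₁ (ζ u) R - tauR γ₁ (ζ v) R| ≤ (4*ℓ/B) * |u - v| := hLip u hu v hv
        _ ≤ (Real.toNNReal (4*ℓ/B)) * |u - v| := by
            apply mul_le_mul_of_nonneg_right _ (abs_nonneg _)
            exact le_of_eq (Real.coe_toNNReal _ (by positivity)).symm
    exact this.continuousOn
  -- choose the threshold cδ from δ
  obtain ⟨cδ, hcδF, hcδmem⟩ : ∃ cδ : ℝ, Real.arccos (1 - cδ - cδ^2/2) < δ ∧
      cδ ∈ Set.Ioc (0:ℝ) 1 := by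
    have hFc : Continuous (fun c : ℝ => Real.arccos (1 - c - c^2/2)) :=
      Real.continuous_arccos.comp (by fun_prop)
    have hF0 : Real.arccos (1 - (0:ℝ) - (0:ℝ)^2/2) = 0 := by
      norm_num [Real.arccos_one]
    have hev : ∀ᶠ cc in nhds (0:ℝ), Real.arccos (1 - cc - cc^2/2) < δ := by
      have := hFc.continuousAt (x := (0:ℝ))
      exact this.eventually_lt continuousAt_const (by rw [hF0]; exact hδpos)
    have hev' : ∀ᶠ cc in nhdsWithin (0:ℝ) (Set.Ioi 0),
        Real.arccos (1 - cc - cc^2/2) < δ := hev.filter_mono nhdsWithin_le_nhds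
    have hset : ∀ᶠ cc in nhdsWithin (0:ℝ) (Set.Ioi 0), cc ∈ Set.Ioc (0:ℝ) 1 :=
      Ioc_mem_nhdsGT zero_lt_one
    exact (hev'.and hset).exists
  set c₀ := min cδ (Real.sqrt 2) / 2 with hc₀def
  clear_value c₀
  have hsqrt2pos : (0:ℝ) < Real.sqrt 2 := Real.sqrt_pos.mpr (by norm_num)
  have hc₀pos : 0 < c₀ := by
    rw [hc₀def]
    have := lt_min hcδmem.1 hsqrt2pos
    linarith
  have hc₀le : c₀ ≤ Real.sqrt 2 := by
    rw [hc₀def]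
    have := min_le_right cδ (Real.sqrt 2)
    linarith
  obtain ⟨u, hu01, hhu⟩ : ∃ u ∈ Set.Icc (0:ℝ) 1, tauR γ₁ (ζ u) R = c₀ := by
    have hsub := intermediate_value_Icc (zero_le_one (α := ℝ)) hcont
    have hmem : c₀ ∈ Set.Icc (tauR γ₁ (ζ 0) R) (tauR γ₁ (ζ 1) R) := by
      rw [hh0]
      exact ⟨hc₀pos.le, by linarith [hh1, hc₀le]⟩
    obtain ⟨u, hu, hu'⟩ := hsub hmem
    exact ⟨u, hu, hu'⟩
  have hζu_pos : 0 < dist p (c u) := lt_of_lt_of_le (by linarith) (hlu u hu01)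
  rcases hδdich γ₁ (ζ u) L₁ (dist p (c u)) hL1 hζu_pos hp1 (hζ0 u) h1 (hζg u) with hang | hang
  · have h0' := tau_eq_zero_of_alex_eq_zero hR hres1 (hresζ u hu01) hp1 (hζ0 u) hang
    rw [hhu] at h0'
    exact absurd h0' (ne_of_gt hc₀pos)
  · have htaulow : tauR γ₁ (ζ u) R < cδ := by
      rw [hhu, hc₀def]
      have := min_le_left cδ (Real.sqrt 2)
      linarith [hcδmem.1]
    have hupper := alex_le_of_tau_lt hCN hR hres1 (hresζ u hu01) hp1 (hζ0 u)
      hcδmem.1 hcδmem.2 htaulow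
    linarith [hupper, hcδF, hang]

end AuxTree5
section AuxTree6

variable {X : Type*} [MetricSpace X]

/-- Half of the tripod identity: distance from `x` to the endpoint of the
geodesic equals distance to the projection plus the remaining length. -/
lemma tree_half (hX : CAT0 X)
    (hdisc : ∀ p : X, ∃ δ > 0, ∀ (γ σ : ℝ → X) (L M : ℝ), 0 < L → 0 < M →
      γ 0 = p → σ 0 = p → IsGeodesicOn γ 0 L → IsGeodesicOn σ 0 M →
      alexAngle γ σ = 0 ∨ δ ≤ alexAngle γ σ)
    {γ : ℝ → X} {D t₀ : ℝ} (hγ : IsGeodesicOn γ 0 D) (ht₀ : t₀ ∈ Set.Icc 0 D)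
    (x : X) (hmin : ∀ t ∈ Set.Icc 0 D, dist x (γ t₀) ≤ dist x (γ t)) :
    dist x (γ D) = dist x (γ t₀) + (D - t₀) := by
  obtain ⟨hG, hCN⟩ := hX
  rcases eq_or_lt_of_le ht₀.2 with heq | hlt
  · rw [← heq, sub_self, add_zero]
  rcases eq_or_lt_of_le (dist_nonneg (x := x) (y := γ t₀)) with hr0 | hrpos
  · have hxm : x = γ t₀ := dist_eq_zero.mp hr0.symm
    have hDmem : D ∈ Set.Icc (0:ℝ) D := ⟨ht₀.1.trans ht₀.2, le_refl _⟩
    rw [hxm, dist_self, zero_add, hγ t₀ ht₀ D hDmem,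
      abs_of_nonpos (by linarith [ht₀.2] : t₀ - D ≤ 0)]
    ring
  · obtain ⟨η, hη0, hηe, hηg⟩ := hG (γ t₀) x
    have hrc : dist (γ t₀) x = dist x (γ t₀) := dist_comm _ _
    have hrpos' : 0 < dist (γ t₀) x := by rw [hrc]; exact hrpos
    have hγ₂g : IsGeodesicOn (fun s => γ (t₀ + s)) 0 (D - t₀) := by
      intro s hs t ht
      have h1 : t₀ + s ∈ Set.Icc 0 D := ⟨by linarith [hs.1, ht₀.1], by linarith [hs.2]⟩
      have h2 : t₀ + t ∈ Set.Icc 0 D := ⟨by linarith [ht.1, ht₀.1], by linarith [ht.2]⟩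
      simp only
      rw [hγ _ h1 _ h2]
      congr 1
      ring
    have hγ₂0 : (fun s => γ (t₀ + s)) 0 = γ t₀ := by simp only [add_zero]
    have hpy2 : ∀ t ∈ Set.Icc (0:ℝ) (dist (γ t₀) x), ∀ s ∈ Set.Icc (0:ℝ) (D - t₀),
        t^2 + s^2 ≤ dist (η t) ((fun s => γ (t₀ + s)) s)^2 := by
      intro t htm s hsm
      have hwm : dist (η t) (γ t₀) = t := by
        rw [← hη0, hηg t ⟨htm.1, htm.2⟩ 0 ⟨le_refl _, dist_nonneg⟩, sub_zero,
          abs_of_nonneg htm.1]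
      have hxw : dist x (η t) = dist (γ t₀) x - t := by
        have h3 := hηg t htm (dist (γ t₀) x) ⟨dist_nonneg, le_refl _⟩
        rw [hηe] at h3
        rw [dist_comm x (η t), h3, abs_of_nonpos (by linarith [htm.2])]
        ring
      have hwmin : ∀ t' ∈ Set.Icc (0:ℝ) D, dist (η t) (γ t₀) ≤ dist (η t) (γ t') := by
        intro t' ht'
        have h1 := hmin t' ht'
        have h2 : dist x (γ t') ≤ dist x (η t) + dist (η t) (γ t') := dist_triangle _ _ _
        rw [hxw] at h2
        rw [hwm]
        linarith [h1, h2, hrc]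
      have hP := py hCN hγ (η t) ht₀ hwmin (t₀ + s) ⟨by linarith [hsm.1, ht₀.1], by linarith [hsm.2]⟩
      rw [hwm, show t₀ + s - t₀ = s by ring] at hP
      exact hP
    have hML := tree_main_lemma hG hCN (hdisc (γ t₀)) hηg hγ₂g hη0 hγ₂0
      hrpos' (by linarith : 0 < D - t₀) hpy2
    rw [hηe] at hML
    rw [show t₀ + (D - t₀) = D by ring] at hML
    rw [hML, hrc]
end AuxTree6
/-- A complete CAT(0) space whose space of directions at every point is
discrete (angles between distinct directions bounded below) is an ℝ-tree: every
geodesic triangle is 0-thin, i.e. has a median/tripod point. -/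
theorem stmt_2 {X : Type*} [MetricSpace X] [CompleteSpace X] (hX : CAT0 X)
    (hdisc : ∀ p : X, ∃ δ > 0, ∀ (γ σ : ℝ → X) (L M : ℝ), 0 < L → 0 < M →
      γ 0 = p → σ 0 = p → IsGeodesicOn γ 0 L → IsGeodesicOn σ 0 M →
      alexAngle γ σ = 0 ∨ δ ≤ alexAngle γ σ) :
    ∀ x y z : X, ∃ m : X,
      dist x m + dist m y = dist x y ∧
      dist y m + dist m z = dist y z ∧
      dist x m + dist m z = dist x z := by
  intro x y z
  obtain ⟨γ, hγ0, hγe, hγg⟩ := hX.1 y z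
  have hD : (0:ℝ) ≤ dist y z := dist_nonneg
  obtain ⟨t₀, ht₀, hmin'⟩ := isCompact_Icc.exists_isMinOn (Set.nonempty_Icc.mpr hD)
    (distGeo_continuousOn hγg x)
  have hmin : ∀ t ∈ Set.Icc (0:ℝ) (dist y z), dist x (γ t₀) ≤ dist x (γ t) :=
    fun t ht => hmin' ht
  -- distance from x to z
  have hz : dist x z = dist x (γ t₀) + (dist y z - t₀) := by
    have := tree_half hX hdisc hγg ht₀ x hmin
    rw [hγe] at this
    exact this
  -- reversed geodesic, for the distance from x to y
  have hγ'g : IsGeodesicOn (fun s => γ (dist y z - s)) 0 (dist y z) := by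
    intro s hs t ht
    have h1 : dist y z - s ∈ Set.Icc (0:ℝ) (dist y z) := ⟨by linarith [hs.2], by linarith [hs.1]⟩
    have h2 : dist y z - t ∈ Set.Icc (0:ℝ) (dist y z) := ⟨by linarith [ht.2], by linarith [ht.1]⟩
    simp only
    rw [hγg _ h1 _ h2, show dist y z - s - (dist y z - t) = t - s by ring, abs_sub_comm]
  have ht₀' : dist y z - t₀ ∈ Set.Icc (0:ℝ) (dist y z) := ⟨by linarith [ht₀.2], by linarith [ht₀.1]⟩
  have hmin2 : ∀ t ∈ Set.Icc (0:ℝ) (dist y z),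
      dist x ((fun s => γ (dist y z - s)) (dist y z - t₀)) ≤
        dist x ((fun s => γ (dist y z - s)) t) := by
    intro t ht
    simp only
    rw [show dist y z - (dist y z - t₀) = t₀ by ring]
    exact hmin _ ⟨by linarith [ht.2], by linarith [ht.1]⟩
  have hy : dist x y = dist x (γ t₀) + t₀ := by
    have h4 := tree_half hX hdisc hγ'g ht₀' x hmin2
    rw [show dist y z - dist y z = 0 by ring, hγ0,
      show dist y z - (dist y z - t₀) = t₀ by ring] at h4
    exact h4
  have hmy : dist (γ t₀) y = t₀ := by
    rw [← hγ0, hγg t₀ ht₀ 0 ⟨le_refl _, hD⟩, sub_zero, abs_of_nonneg ht₀.1]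
  have hmz : dist (γ t₀) z = dist y z - t₀ := by
    have h5 := hγg t₀ ht₀ (dist y z) ⟨hD, le_refl _⟩
    rw [hγe] at h5
    rw [h5, abs_of_nonpos (by linarith [ht₀.2])]
    ring
  refine ⟨γ t₀, ?_, ?_, ?_⟩
  · rw [hmy, hy]
  · rw [dist_comm y (γ t₀), hmy, hmz]
    ring
  · rw [hmz, hz]
end

section
/- Let X be a geodesic CAT(0) space, γ a geodesic line in X with limit boundary points ξ₊, ξ₋, and suppose the projection to γ of every closed metric ball disjoint from γ has diameter at most M. Let h be an isometry of X fixing ξ₊ (in the sense that it fixes the class of rays asymptotic to a ray ρ ⊂ γ representing ξ₊) with d(ρ, hρ) > M, where d denotes the infimal distance between the two rays. Then a contradiction arises: there exist points on ρ within distance D = d(ρ(0), hρ(0)) of hγ whose projections to hγ are more than M apart while the connecting ball of radius M misses hγ. Hence no such h exists; i.e., any isometry fixing ξ₊ moves ρ by at most M in the infimal-distance sense. -/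
open Filter Set Metric

/-- On a geodesic line, every point of the space has a nearest point. -/
lemma exists_proj_line {X : Type*} [MetricSpace X] (η : ℝ → X)
    (hη : IsGeodesicLine η) (x : X) : ∃ s : ℝ, ∀ u : ℝ, dist x (η s) ≤ dist x (η u) := by
  have hlip : LipschitzWith 1 η := by
    apply LipschitzWith.of_dist_le_mul
    intro a b
    rw [hη, Real.dist_eq]
    simp
  set d0 := dist x (η 0) with hd0
  have hd0nn : 0 ≤ d0 := dist_nonneg
  have hcont : ContinuousOn (fun u => dist x (η u)) (Set.Icc (-(2*d0+1)) (2*d0+1)) :=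
    (continuous_const.dist hlip.continuous).continuousOn
  have h0mem : (0:ℝ) ∈ Set.Icc (-(2*d0+1)) (2*d0+1) := by
    constructor <;> nlinarith
  obtain ⟨s, hsmem, hsmin⟩ :=
    isCompact_Icc.exists_isMinOn ⟨0, h0mem⟩ hcont
  refine ⟨s, fun u => ?_⟩
  by_cases hu : u ∈ Set.Icc (-(2*d0+1)) (2*d0+1)
  · exact hsmin hu
  · have hs0 : dist x (η s) ≤ d0 := hsmin h0mem
    have habs : 2*d0+1 < |u| := by
      rcases abs_cases u with ⟨h1, h2⟩ <;> simp only [Set.mem_Icc, not_and_or, not_le] at hu <;>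
        rcases hu with h | h <;> linarith
    have h1 : dist (η 0) (η u) ≤ dist (η 0) x + dist x (η u) := dist_triangle _ _ _
    have h2 : dist (η 0) (η u) = |u| := by rw [hη]; simp
    have h3 : dist (η 0) x = d0 := by rw [dist_comm]
    linarith

/-- If the projection to a geodesic line `γ` of every closed ball
disjoint from `γ` has diameter `≤ M`, then any isometry `h` fixing the boundary point
`ξ₊` of `γ` (i.e. with `h∘ρ` asymptotic to `ρ`, where `ρ = γ|_{[0,∞)}`) moves the ray
`ρ` by at most `M` in the infimal-distance sense. -/
theorem stmt_14 {X : Type*} [MetricSpace X] (hX : CAT0 X)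
    (γ : ℝ → X) (hγ : IsGeodesicLine γ) (M : ℝ) (hM : 0 ≤ M)
    (hcontr : ∀ (c : X) (r : ℝ), Metric.closedBall c r ∩ Set.range γ = ∅ →
      ∀ x ∈ Metric.closedBall c r, ∀ y ∈ Metric.closedBall c r, ∀ sx sy : ℝ,
        (∀ u : ℝ, dist x (γ sx) ≤ dist x (γ u)) →
        (∀ u : ℝ, dist y (γ sy) ≤ dist y (γ u)) →
        dist (γ sx) (γ sy) ≤ M)
    (h : X ≃ᵢ X) (hfix : ∃ C : ℝ, ∀ t ≥ (0:ℝ), dist (h (γ t)) (γ t) ≤ C) :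
    sInf {d : ℝ | ∃ t₁ t₂ : ℝ, 0 ≤ t₁ ∧ 0 ≤ t₂ ∧ d = dist (γ t₁) (h (γ t₂))} ≤ M := by
  by_contra hcon
  push_neg at hcon
  set S := {d : ℝ | ∃ t₁ t₂ : ℝ, 0 ≤ t₁ ∧ 0 ≤ t₂ ∧ d = dist (γ t₁) (h (γ t₂))} with hS
  set I := sInf S with hI
  -- basic facts about S
  have hbdd : BddBelow S := by
    refine ⟨0, fun d hd => ?_⟩
    obtain ⟨t₁, t₂, _, _, rfl⟩ := hd
    exact dist_nonneg
  have hmemS : ∀ t₁ t₂ : ℝ, 0 ≤ t₁ → 0 ≤ t₂ → I ≤ dist (γ t₁) (h (γ t₂)) := by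
    intro t₁ t₂ h1 h2
    exact csInf_le hbdd ⟨t₁, t₂, h1, h2, rfl⟩
  obtain ⟨C, hC⟩ := hfix
  have hC0 : 0 ≤ C := le_trans dist_nonneg (hC 0 le_rfl)
  -- the translated line η = h ∘ γ
  set η : ℝ → X := fun t => h (γ t) with hη_def
  have hη : IsGeodesicLine η := by
    intro s t
    simp only [hη_def, h.dist_eq]
    exact hγ s t
  -- contracting property transported to η
  have hcontr' : ∀ (c : X) (r : ℝ), Metric.closedBall c r ∩ Set.range η = ∅ →
      ∀ x ∈ Metric.closedBall c r, ∀ y ∈ Metric.closedBall c r, ∀ sx sy : ℝ,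
        (∀ u : ℝ, dist x (η sx) ≤ dist x (η u)) →
        (∀ u : ℝ, dist y (η sy) ≤ dist y (η u)) →
        dist (η sx) (η sy) ≤ M := by
    intro c r hdisj x hx y hy sx sy hsx hsy
    have hdisj' : Metric.closedBall (h.symm c) r ∩ Set.range γ = ∅ := by
      rw [Set.eq_empty_iff_forall_notMem]
      rintro z ⟨hz1, u, rfl⟩
      have : η u ∈ Metric.closedBall c r ∩ Set.range η := by
        constructor
        · rw [Metric.mem_closedBall] at hz1 ⊢
          calc dist (η u) c = dist (h (γ u)) (h (h.symm c)) := by simp [hη_def]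
            _ = dist (γ u) (h.symm c) := h.dist_eq _ _
            _ ≤ r := hz1
        · exact ⟨u, rfl⟩
      rw [hdisj] at this
      exact this
    have key := hcontr (h.symm c) r hdisj' (h.symm x) ?_ (h.symm y) ?_ sx sy ?_ ?_
    · calc dist (η sx) (η sy) = dist (h (γ sx)) (h (γ sy)) := rfl
        _ = dist (γ sx) (γ sy) := h.dist_eq _ _
        _ ≤ M := key
    · rw [Metric.mem_closedBall] at hx ⊢
      calc dist (h.symm x) (h.symm c) = dist x c := h.symm.dist_eq _ _
        _ ≤ r := hx
    · rw [Metric.mem_closedBall] at hy ⊢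
      calc dist (h.symm y) (h.symm c) = dist y c := h.symm.dist_eq _ _
        _ ≤ r := hy
    · intro u
      have e1 : dist (h.symm x) (γ sx) = dist x (η sx) := by
        rw [← h.symm.dist_eq x (η sx)]; simp [hη_def]
      have e2 : dist (h.symm x) (γ u) = dist x (η u) := by
        rw [← h.symm.dist_eq x (η u)]; simp [hη_def]
      rw [e1, e2]; exact hsx u
    · intro u
      have e1 : dist (h.symm y) (γ sy) = dist y (η sy) := by
        rw [← h.symm.dist_eq y (η sy)]; simp [hη_def]
      have e2 : dist (h.symm y) (γ u) = dist y (η u) := by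
        rw [← h.symm.dist_eq y (η u)]; simp [hη_def]
      rw [e1, e2]; exact hsy u
  -- projections onto η
  have hproj : ∀ t : ℝ, ∃ s : ℝ, ∀ u : ℝ, dist (γ t) (η s) ≤ dist (γ t) (η u) :=
    fun t => exists_proj_line η hη (γ t)
  choose p hp using hproj
  -- step length L
  have hIM : M < I := hcon
  have hI0 : 0 < I := lt_of_le_of_lt hM hIM
  set L : ℝ := M + I with hL_def
  have hL0 : 0 < L := by positivity
  have hLhalf1 : M < L / 2 := by rw [hL_def]; linarith
  have hLhalf2 : L / 2 < I := by rw [hL_def]; linarith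
  set t0 : ℝ := C + L with ht0_def
  have ht0nn : 0 ≤ t0 := by positivity
  -- projections are within C of the original points
  have hpC : ∀ t : ℝ, 0 ≤ t → dist (γ t) (η (p t)) ≤ C :=
    fun t ht => le_trans (hp t t) (by rw [dist_comm]; exact hC t ht)
  -- the contracting step
  have hstep : ∀ n : ℕ, dist (η (p (t0 + n * L))) (η (p (t0 + (n+1) * L))) ≤ M := by
    intro n
    have hn0 : (0:ℝ) ≤ n * L := by positivity
    set c : X := γ (t0 + n * L + L / 2) with hc_def
    have hcnn : 0 ≤ t0 + n * L + L / 2 := by positivity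
    have hdisj : Metric.closedBall c (L / 2) ∩ Set.range η = ∅ := by
      rw [Set.eq_empty_iff_forall_notMem]
      rintro z ⟨hz1, u, rfl⟩
      rw [Metric.mem_closedBall] at hz1
      by_cases hu : 0 ≤ u
      · have := hmemS (t0 + n * L + L / 2) u hcnn hu
        rw [dist_comm] at hz1
        exact absurd (le_trans this hz1) (not_le.mpr hLhalf2)
      · -- u < 0 : η u is far from c since c is far along the ray
        push_neg at hu
        have h1 : dist (η (t0 + n * L + L / 2)) (η u) = t0 + n * L + L / 2 - u := by
          rw [hη, abs_of_nonneg]; linarith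
        have h2 : dist (η (t0 + n * L + L / 2)) c ≤ C := by
          rw [dist_comm]; exact le_trans (dist_comm (γ _) (η _) ▸ (hC _ hcnn)) le_rfl
        have h3 : dist (η (t0 + n * L + L / 2)) (η u) ≤
            dist (η (t0 + n * L + L / 2)) c + dist c (η u) := dist_triangle _ _ _
        rw [dist_comm (η u) c] at hz1
        rw [ht0_def] at h1
        nlinarith
    have hx : γ (t0 + n * L) ∈ Metric.closedBall c (L / 2) := by
      rw [Metric.mem_closedBall, hγ]
      rw [abs_of_nonpos (by linarith)]
      linarith
    have hy : γ (t0 + (n+1) * L) ∈ Metric.closedBall c (L / 2) := by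
      rw [Metric.mem_closedBall, hγ]
      rw [abs_of_nonneg (by push_cast; ring_nf; nlinarith)]
      push_cast; ring_nf; nlinarith
    exact hcontr' c (L / 2) hdisj _ hx _ hy _ _ (hp _) (hp _)
  -- choose N large
  obtain ⟨N, hN⟩ := exists_nat_gt (2 * C / (L - M))
  have hLM : 0 < L - M := by rw [hL_def]; linarith
  have hN' : 2 * C < N * (L - M) := by
    rw [div_lt_iff₀ hLM] at hN
    linarith
  -- chain upper bound
  have hchain : dist (η (p t0)) (η (p (t0 + N * L))) ≤ N * M := by
    have := dist_le_range_sum_dist (fun n : ℕ => η (p (t0 + n * L))) N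
    simp only [Nat.cast_zero, zero_mul, add_zero] at this
    refine le_trans this ?_
    calc ∑ i ∈ Finset.range N, dist (η (p (t0 + i * L))) (η (p (t0 + (↑(i+1):ℝ) * L)))
        ≤ ∑ _i ∈ Finset.range N, M := by
          apply Finset.sum_le_sum
          intro i _
          have := hstep i
          push_cast at this ⊢
          exact this
      _ = N * M := by rw [Finset.sum_const, Finset.card_range, nsmul_eq_mul]
  -- lower bound
  have hlow : (N : ℝ) * L - 2 * C ≤ dist (η (p t0)) (η (p (t0 + N * L))) := by
    have hd : dist (γ t0) (γ (t0 + N * L)) = N * L := by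
      rw [hγ]
      have hNL : (0:ℝ) ≤ N * L := by positivity
      rw [abs_of_nonpos (by linarith)]
      ring
    have h1 : dist (γ t0) (γ (t0 + N * L)) ≤
        dist (γ t0) (η (p t0)) + dist (η (p t0)) (η (p (t0 + N * L)))
          + dist (η (p (t0 + N * L))) (γ (t0 + N * L)) := dist_triangle4 _ _ _ _
    have h2 : dist (γ t0) (η (p t0)) ≤ C := hpC t0 ht0nn
    have h3 : dist (η (p (t0 + N * L))) (γ (t0 + N * L)) ≤ C := by
      rw [dist_comm]; exact hpC _ (by positivity)
    linarith [hd ▸ h1]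
  -- contradiction
  have : (N : ℝ) * L - 2 * C ≤ N * M := le_trans hlow hchain
  nlinarith
end
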